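/- arXiv:2101.11258 — 2 statements merged into one kernel-verified Lean document; each statement's English description precedes it below -/
import Mathlib

section
/- Uniform bound on the trajectories: Fix an integer N ≥ 1, intensities a_1,…,a_N ∈ ℝ∖{0} satisfying the non-neutral cluster hypothesis, a final time T > 0, and a constant M ≥ 0. Then there exists a constant C > 0, depending only on N, the intensities a_i, T and M, such that for every kernel profile G : (0,∞) → ℝ that is differentiable with locally Lipschitz derivative on (0,∞), whose derivative is Lipschitz on [1,∞), and with sup_{r≥1} |G'(r)| ≤ M, and for every solution (x_1,…,x_N) of the point-vortex system with kernel G on [0,T) with no collapse, one has sup_{t∈[0,T)} max_{1≤i≤N} |x_i(t) − x_i(0)| ≤ C. In particular C does not depend on the initial positions nor on the behavior of G near 0. -/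
/-!
Induction on the size of a cluster `S` of vortices staying at distance `≥ 1` from all the
others. Only the part `r ≥ 1` of the kernel, where `|G'| ≤ M`, couples `S` to the rest, while the
interactions inside `S` cancel in pairs; so the center of vorticity `∑ aᵢ xᵢ / ∑ aᵢ` of `S` moves
with speed at most `(∑ |aᵢ|)² M / m`, where `m > 0` bounds every `|∑_{i ∈ P} aᵢ|` from below
(non-neutrality). While the diameter of `S` stays below `R`, each vortex is within
`(∑ |aᵢ|) R / m` of that center, which bounds its displacement. At the first time the diameter
reaches `|S| r`, some gap of width `r` among the `|S|` distances to one vortex splits `S` into two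
subclusters more than `r` apart. With `r = 2C + 1`, `C` bounding the displacement of smaller
isolated clusters, a bootstrap argument keeps the two subclusters isolated, and the induction
hypothesis applies to each of them.
-/

open Filter MeasureTheory

noncomputable section

/-- The plane `ℝ²`. -/
abbrev Plane : Type := EuclideanSpace ℝ (Fin 2)

/-- Counterclockwise rotation by `π/2`: `(v₁, v₂)^⊥ = (−v₂, v₁)`. -/
def perp (v : Plane) : Plane := WithLp.toLp 2 ![-v 1, v 0]

/-- `∇^⊥_y K(|y|) = K'(|y|) y^⊥ / |y|` for a radial kernel profile `K`. -/
def gradPerp (K : ℝ → ℝ) (y : Plane) : Plane := (deriv K ‖y‖ / ‖y‖) • perp y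

/-- A solution of the point-vortex system with intensities `a`, kernel profile `G`,
on the time interval `[0, T)`, with no collapse. -/
def IsVortexSolution (N : ℕ) (a : Fin N → ℝ) (G : ℝ → ℝ) (T : ℝ)
    (x : Fin N → ℝ → Plane) : Prop :=
  (∀ t ∈ Set.Ico (0 : ℝ) T, ∀ i j : Fin N, i ≠ j → x i t ≠ x j t) ∧
  ∀ i : Fin N, ∀ t ∈ Set.Ico (0 : ℝ) T,
    HasDerivWithinAt (x i)
      (∑ j ∈ Finset.univ.erase i, a j • gradPerp G (x i t - x j t))
      (Set.Ico 0 T) t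

/-- The kernel regularity used in the paper: `G ∈ C^{1,1}_loc((0,∞)) ∩ C^{1,1}([1,∞))`,
i.e. `G` is differentiable on `(0,∞)`, with locally Lipschitz derivative there,
and with Lipschitz derivative on `[1,∞)`. -/
def KernelRegular (G : ℝ → ℝ) : Prop :=
  DifferentiableOn ℝ G (Set.Ioi 0) ∧
  (∀ s : Set ℝ, IsCompact s → s ⊆ Set.Ioi 0 → ∃ L : NNReal, LipschitzOnWith L (deriv G) s) ∧
  (∃ L : NNReal, LipschitzOnWith L (deriv G) (Set.Ici 1))

open Set
open scoped Finset

lemma Finset.sum_sum_eq_zero_of_antisymm {ι E : Type*} [AddCommGroup E] [IsAddTorsionFree E]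
    (s : Finset ι) {f : ι → ι → E} (hf : ∀ i j, f j i = -f i j) :
    ∑ i ∈ s, ∑ j ∈ s, f i j = 0 := by
  refine self_eq_neg.mp ?_
  calc ∑ i ∈ s, ∑ j ∈ s, f i j = ∑ j ∈ s, ∑ i ∈ s, -f j i := by
        rw [Finset.sum_comm]
        exact Finset.sum_congr rfl fun j _ => Finset.sum_congr rfl fun i _ => hf j i
    _ = -∑ i ∈ s, ∑ j ∈ s, f i j := by simp only [Finset.sum_neg_distrib]

lemma Finset.norm_sub_centerMass_le {ι E : Type*} [SeminormedAddCommGroup E] [NormedSpace ℝ E]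
    {s : Finset ι} (w : ι → ℝ) (z : ι → E) (hw : ∑ j ∈ s, w j ≠ 0) {i : ι} {R : ℝ}
    (hR : ∀ j ∈ s, ‖z i - z j‖ ≤ R) :
    ‖z i - s.centerMass w z‖ ≤ (∑ j ∈ s, |w j|) / |∑ j ∈ s, w j| * R := by
  have hsum : z i - s.centerMass w z = (∑ j ∈ s, w j)⁻¹ • ∑ j ∈ s, w j • (z i - z j) := by
    simp only [centerMass, smul_sub, Finset.sum_sub_distrib, ← Finset.sum_smul, smul_smul,
      inv_mul_cancel₀ hw, one_smul]
  rw [hsum, norm_smul, norm_inv, Real.norm_eq_abs, div_mul_eq_mul_div, inv_mul_eq_div,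
    Finset.sum_mul]
  gcongr
  refine norm_sum_le_of_le _ fun j hj => ?_
  rw [norm_smul, Real.norm_eq_abs]
  gcongr
  exact hR j hj

lemma exists_first_hitting_time {ι : Type*} {s : Finset ι} {f : ι → ℝ → ℝ} {K : Set ℝ}
    {a b : ℝ} (hf : ∀ i ∈ s, ContinuousOn (f i) (Icc a b)) (hK : IsClosed K)
    (hhit : ∃ u ∈ Icc a b, ∃ i ∈ s, f i u ∈ K) :
    ∃ t ∈ Icc a b, (∃ i ∈ s, f i t ∈ K) ∧ ∀ u ∈ Ico a t, ∀ i ∈ s, f i u ∉ K := by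
  set E := ⋃ i ∈ s, Icc a b ∩ f i ⁻¹' K
  have hE : IsClosed E :=
    isClosed_biUnion_finset fun i hi => (hf i hi).preimage_isClosed_of_isClosed isClosed_Icc hK
  have hmem : ∀ u, u ∈ E ↔ u ∈ Icc a b ∧ ∃ i ∈ s, f i u ∈ K := by
    intro u; simp only [E, mem_iUnion, mem_inter_iff, Set.mem_preimage, exists_prop]; tauto
  have hEne : E.Nonempty := by
    obtain ⟨u, hu, hit⟩ := hhit
    exact ⟨u, (hmem u).2 ⟨hu, hit⟩⟩
  have hEbdd : BddBelow E := ⟨a, fun u hu => ((hmem u).1 hu).1.1⟩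
  obtain ⟨htab, hthit⟩ := (hmem _).1 (hE.csInf_mem hEne hEbdd)
  refine ⟨sInf E, htab, hthit, fun u hu i hi hfu => notMem_of_lt_csInf hu.2 hEbdd ?_⟩
  exact (hmem u).2 ⟨⟨hu.1, hu.2.le.trans htab.2⟩, i, hi, hfu⟩

lemma ContinuousOn.le_of_forall_Ico_le {f g : ℝ → ℝ} {a b : ℝ} (hf : ContinuousOn f (Icc a b))
    (hg : ContinuousOn g (Icc a b)) (hab : a < b) (h : ∀ u ∈ Ico a b, f u ≤ g u) : f b ≤ g b :=
  have hb : b ∈ Icc a b := right_mem_Icc.2 hab.le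
  ContinuousWithinAt.closure_le (by rw [closure_Ico hab.ne]; exact hb)
    ((hf b hb).mono Ico_subset_Icc_self) ((hg b hb).mono Ico_subset_Icc_self) h

lemma forall_lt_of_bootstrap {ι : Type*} {s : Finset ι} {f : ι → ℝ → ℝ} {a b c : ℝ}
    (hf : ∀ i ∈ s, ContinuousOn (f i) (Icc a b)) (ha : ∀ i ∈ s, c < f i a)
    (hstep : ∀ t ∈ Icc a b, (∀ u ∈ Icc a t, ∀ i ∈ s, c ≤ f i u) → ∀ i ∈ s, c < f i t) :
    ∀ t ∈ Icc a b, ∀ i ∈ s, c < f i t := by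
  by_contra! hfail
  obtain ⟨t, ht, ⟨i, hi, hit⟩, hbefore⟩ :=
    exists_first_hitting_time hf isClosed_Iic (by simpa only [Set.mem_Iic] using hfail)
  simp only [Set.mem_Iic, not_le] at hit hbefore
  rcases ht.1.eq_or_lt with rfl | hat
  · exact (ha i hi).not_ge hit
  · have hweak : ∀ u ∈ Icc a t, ∀ j ∈ s, c ≤ f j u := by
      intro u hu j hj
      rcases hu.2.eq_or_lt with rfl | hut
      · exact ContinuousOn.le_of_forall_Ico_le continuousOn_const
          ((hf j hj).mono (Icc_subset_Icc_right ht.2)) hat fun v hv => (hbefore v hv j hj).le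
      · exact (hbefore u ⟨hu.1, hut⟩ j hj).le
    exact (hstep t ht hweak i hi).not_ge hit

lemma Finset.exists_gap {ι : Type*} [DecidableEq ι] (s : Finset ι) (d : ι → ℝ) {r : ℝ}
    (hr : 0 < r) {i₀ : ι} (hi₀ : i₀ ∈ s) (hd : d i₀ ≤ 0) :
    ∃ l : ℕ, l < #s ∧ ∀ j ∈ s, d j ∉ Set.Ioc (l * r) ((l + 1) * r) := by
  have hcard : #((s.erase i₀).image fun j => ⌈d j / r⌉₊ - 1) < #(Finset.range #s) := by
    rw [Finset.card_range]
    exact (Finset.card_image_le.trans (Finset.card_erase_of_mem hi₀).le).trans_lt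
      (Nat.sub_lt (Finset.card_pos.2 ⟨i₀, hi₀⟩) one_pos)
  obtain ⟨l, hl, hlnot⟩ := Finset.exists_mem_notMem_of_card_lt_card hcard
  refine ⟨l, Finset.mem_range.1 hl, fun j hj hdj =>
    hlnot (Finset.mem_image.2 ⟨j, Finset.mem_erase.2 ⟨?_, hj⟩, ?_⟩)⟩
  · rintro rfl
    exact (hdj.1.trans_le hd).not_ge (by positivity)
  · have hceil : ⌈d j / r⌉₊ = l + 1 := by
      rw [Nat.ceil_eq_iff l.succ_ne_zero, Nat.succ_sub_one, lt_div_iff₀ hr,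
        div_le_iff₀ hr]
      exact_mod_cast hdj
    omega

lemma Finset.exists_split_of_le_dist {ι α : Type*} [DecidableEq ι] [PseudoMetricSpace α]
    (s : Finset ι) (p : ι → α) {r : ℝ} (hr : 0 < r) {i₀ j₀ : ι} (hi₀ : i₀ ∈ s)
    (hfar : #s * r ≤ dist (p i₀) (p j₀)) :
    ∃ P ⊆ s, i₀ ∈ P ∧ j₀ ∉ P ∧ ∀ i ∈ P, ∀ j ∈ s \ P, r < dist (p i) (p j) := by
  obtain ⟨l, hl, hgap⟩ := s.exists_gap (fun j => dist (p i₀) (p j)) hr hi₀ (by simp)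
  have hls : ((l : ℝ) + 1) * r ≤ #s * r := by gcongr; exact_mod_cast hl
  refine ⟨s.filter fun j => dist (p i₀) (p j) ≤ l * r, Finset.filter_subset _ _, ?_, ?_, ?_⟩
  · simp only [Finset.mem_filter, dist_self]; exact ⟨hi₀, by positivity⟩
  · simp only [Finset.mem_filter, not_and, not_le]; intro; nlinarith
  · intro i hi j hj
    simp only [Finset.mem_sdiff, Finset.mem_filter, not_and, not_le] at hi hj
    have hj' : (l + 1) * r < dist (p i₀) (p j) := by
      by_contra! h
      exact hgap j hj.1 ⟨hj.2 hj.1, h⟩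
    linarith [dist_triangle (p i₀) (p i) (p j)]

lemma exists_pos_forall_le_abs_sum {ι : Type*} [Fintype ι] (a : ι → ℝ)
    (ha : ∀ P : Finset ι, P.Nonempty → ∑ i ∈ P, a i ≠ 0) :
    ∃ m > 0, ∀ P : Finset ι, P.Nonempty → m ≤ |∑ i ∈ P, a i| := by
  let g : Finset ι → ℝ := fun P => if P.Nonempty then |∑ i ∈ P, a i| else 1
  refine ⟨Finset.univ.inf' Finset.univ_nonempty g, ?_, fun P hP => ?_⟩
  · refine (Finset.lt_inf'_iff _).2 fun P _ => ?_
    by_cases hP : P.Nonempty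
    · simpa [g, hP] using ha P hP
    · simp [g, hP]
  · have := Finset.inf'_le g (Finset.mem_univ P)
    rwa [show g P = |∑ i ∈ P, a i| from if_pos hP] at this

lemma norm_perp (v : Plane) : ‖perp v‖ = ‖v‖ := by
  simp [EuclideanSpace.norm_eq, perp, Fin.sum_univ_two]; ring_nf

lemma perp_neg (v : Plane) : perp (-v) = -perp v := by
  ext i; fin_cases i <;> simp [perp]

lemma gradPerp_neg (K : ℝ → ℝ) (y : Plane) : gradPerp K (-y) = -gradPerp K y := by
  rw [gradPerp, gradPerp, norm_neg, perp_neg, smul_neg]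

@[simp] lemma gradPerp_zero (K : ℝ → ℝ) : gradPerp K 0 = 0 := by
  simp [gradPerp]

lemma norm_gradPerp_le {K : ℝ → ℝ} {M : ℝ} (hM : ∀ r, 1 ≤ r → |deriv K r| ≤ M) {y : Plane}
    (hy : 1 ≤ ‖y‖) : ‖gradPerp K y‖ ≤ M := by
  have hy0 : ‖y‖ ≠ 0 := by positivity
  rw [gradPerp, norm_smul, norm_perp, Real.norm_eq_abs, abs_div, abs_norm,
    div_mul_cancel₀ _ hy0]
  exact hM _ hy

def IsIsolatedOn {ι E : Type*} [SeminormedAddCommGroup E] (x : ι → ℝ → E) (S : Finset ι)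
    (I : Set ℝ) : Prop :=
  ∀ t ∈ I, ∀ i ∈ S, ∀ j ∉ S, 1 ≤ ‖x i t - x j t‖

lemma IsIsolatedOn.mono {ι E : Type*} [SeminormedAddCommGroup E] {x : ι → ℝ → E}
    {S : Finset ι} {I J : Set ℝ} (hS : IsIsolatedOn x S I) (hJI : J ⊆ I) : IsIsolatedOn x S J :=
  fun t ht => hS t (hJI ht)

lemma IsIsolatedOn.of_subset {ι E : Type*} [DecidableEq ι] [SeminormedAddCommGroup E]
    {x : ι → ℝ → E} {S P : Finset ι} {I : Set ℝ} (hS : IsIsolatedOn x S I) (hPS : P ⊆ S)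
    (hcross : ∀ t ∈ I, ∀ p ∈ P, ∀ q ∈ S \ P, 1 ≤ ‖x p t - x q t‖) : IsIsolatedOn x P I := by
  intro t ht p hp j hj
  by_cases hjS : j ∈ S
  · exact hcross t ht p hp j (Finset.mem_sdiff.2 ⟨hjS, hj⟩)
  · exact hS t ht p (hPS hp) j hjS

lemma IsIsolatedOn.sdiff {ι E : Type*} [DecidableEq ι] [SeminormedAddCommGroup E]
    {x : ι → ℝ → E} {S P : Finset ι} {I : Set ℝ} (hS : IsIsolatedOn x S I) (hPS : P ⊆ S)
    (hcross : ∀ t ∈ I, ∀ p ∈ P, ∀ q ∈ S \ P, 1 ≤ ‖x p t - x q t‖) :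
    IsIsolatedOn x (S \ P) I := by
  refine hS.of_subset Finset.sdiff_subset fun t ht q hq p hp => ?_
  rw [Finset.sdiff_sdiff_eq_self hPS] at hp
  rw [norm_sub_rev]
  exact hcross t ht p hp q hq

def DisplacementBounded {ι E : Type*} [SeminormedAddCommGroup E] (x : ι → ℝ → E) (T : ℝ)
    (k : ℕ) (C : ℝ) : Prop :=
  ∀ S : Finset ι, #S ≤ k → ∀ s u, 0 ≤ s → s ≤ u → u < T → IsIsolatedOn x S (Icc s u) →
    ∀ i ∈ S, ‖x i u - x i s‖ ≤ C

/-- `C_{k+1} = C_k + D`, where `D` bounds the displacement until the diameter of the cluster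
reaches `(k + 1) (2 C_k + 1)`, and `C_k` the displacement of either subcluster afterwards. -/
def clusterBound {ι : Type*} [Fintype ι] (a : ι → ℝ) (m M T : ℝ) : ℕ → ℝ
  | 0 => 0
  | k + 1 =>
    clusterBound a m M T k + (2 * (∑ i, |a i|) * ((k + 1) * (2 * clusterBound a m M T k + 1))
      + (∑ i, |a i|) ^ 2 * M * T) / m

lemma clusterBound_nonneg {ι : Type*} [Fintype ι] (a : ι → ℝ) {m M T : ℝ} (hm : 0 ≤ m)
    (hM : 0 ≤ M) (hT : 0 ≤ T) (k : ℕ) : 0 ≤ clusterBound a m M T k := by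
  induction k with
  | zero => exact le_rfl
  | succ k ih => rw [clusterBound]; positivity

namespace IsVortexSolution

variable {N : ℕ} {a : Fin N → ℝ} {G : ℝ → ℝ} {T M : ℝ} {x : Fin N → ℝ → Plane}

lemma continuousOn (hx : IsVortexSolution N a G T x) (i : Fin N) :
    ContinuousOn (x i) (Ico 0 T) :=
  fun t ht => (hx.2 i t ht).continuousWithinAt

/-- The interactions inside `S` cancel in pairs, so only the pairs `S × Sᶜ` move `∑ aᵢ xᵢ`. -/
lemma hasDerivWithinAt_sum_smul (hx : IsVortexSolution N a G T x) (S : Finset (Fin N))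
    {t : ℝ} (ht : t ∈ Ico 0 T) :
    HasDerivWithinAt (fun t => ∑ i ∈ S, a i • x i t)
      (∑ i ∈ S, ∑ j ∈ Sᶜ, (a i * a j) • gradPerp G (x i t - x j t)) (Ico 0 T) t := by
  set g : Fin N → Fin N → Plane := fun i j => (a i * a j) • gradPerp G (x i t - x j t)
  have hinner : ∑ i ∈ S, ∑ j ∈ S, g i j = 0 := by
    have := IsAddTorsionFree.of_module_rat Plane
    refine S.sum_sum_eq_zero_of_antisymm fun i j => ?_
    simp only [g, ← neg_sub (x i t), gradPerp_neg, mul_comm (a j), smul_neg]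
  refine (HasDerivWithinAt.fun_sum fun i _ => (hx.2 i t ht).const_smul (a i)).congr_deriv ?_
  symm
  calc ∑ i ∈ S, ∑ j ∈ Sᶜ, g i j = ∑ i ∈ S, ∑ j, g i j := by
        rw [← add_zero (∑ i ∈ S, ∑ j ∈ Sᶜ, g i j), ← hinner, add_comm, ← Finset.sum_add_distrib]
        simp only [Finset.sum_add_sum_compl]
    _ = _ := by
        refine Finset.sum_congr rfl fun i _ => ?_
        rw [← Finset.sum_erase _ (a := i) (by simp [g]), Finset.smul_sum]
        simp only [g, smul_smul]

lemma norm_sum_smul_sub_le (hx : IsVortexSolution N a G T x)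
    (hGM : ∀ r, 1 ≤ r → |deriv G r| ≤ M) {S : Finset (Fin N)} {s u : ℝ} (hs : 0 ≤ s)
    (hsu : s ≤ u) (hu : u < T) (hS : IsIsolatedOn x S (Icc s u)) :
    ‖∑ i ∈ S, a i • x i u - ∑ i ∈ S, a i • x i s‖ ≤ (∑ i, |a i|) ^ 2 * M * (u - s) := by
  have hsub : Icc s u ⊆ Ico 0 T := Icc_subset_Ico hs hu
  have hM : 0 ≤ M := (abs_nonneg _).trans (hGM 1 le_rfl)
  have hbound : ∀ t ∈ Icc s u,
      ‖∑ i ∈ S, ∑ j ∈ Sᶜ, (a i * a j) • gradPerp G (x i t - x j t)‖ ≤ (∑ i, |a i|) ^ 2 * M := by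
    intro t ht
    calc _ ≤ ∑ i ∈ S, ∑ j ∈ Sᶜ, |a i| * |a j| * M := by
          refine norm_sum_le_of_le _ fun i hi => norm_sum_le_of_le _ fun j hj => ?_
          rw [norm_smul, Real.norm_eq_abs, abs_mul]
          gcongr
          exact norm_gradPerp_le hGM (hS t ht i hi j (Finset.mem_compl.1 hj))
      _ ≤ ∑ i ∈ S, ∑ j, |a i| * |a j| * M := by
          gcongr
          exact Finset.subset_univ _
      _ ≤ ∑ i, ∑ j, |a i| * |a j| * M := by
          gcongr
          exact Finset.subset_univ _
      _ = (∑ i, |a i|) ^ 2 * M := by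
          rw [sq, Finset.sum_mul_sum, Finset.sum_mul]
          simp only [Finset.sum_mul]
  have := (convex_Icc s u).norm_image_sub_le_of_norm_hasDerivWithin_le
    (fun t ht => (hx.hasDerivWithinAt_sum_smul S (hsub ht)).mono hsub) hbound
    (left_mem_Icc.2 hsu) (right_mem_Icc.2 hsu)
  rwa [Real.norm_eq_abs, abs_of_nonneg (sub_nonneg.2 hsu)] at this

lemma norm_sub_le_of_dist_le (hx : IsVortexSolution N a G T x)
    (hGM : ∀ r, 1 ≤ r → |deriv G r| ≤ M) {S : Finset (Fin N)} {s u R : ℝ} (hs : 0 ≤ s)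
    (hsu : s ≤ u) (hu : u < T) (hS : IsIsolatedOn x S (Icc s u)) (hσ : ∑ i ∈ S, a i ≠ 0)
    (hRs : ∀ i ∈ S, ∀ j ∈ S, ‖x i s - x j s‖ ≤ R) (hRu : ∀ i ∈ S, ∀ j ∈ S, ‖x i u - x j u‖ ≤ R)
    {i : Fin N} (hi : i ∈ S) :
    ‖x i u - x i s‖ ≤
      (2 * (∑ j, |a j|) * R + (∑ j, |a j|) ^ 2 * M * (u - s)) / |∑ j ∈ S, a j| := by
  set c : ℝ → Plane := fun t => S.centerMass a fun j => x j t
  have hR : 0 ≤ R := (norm_nonneg _).trans (hRs i hi i hi)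
  have hspread : ∀ t, (∀ j ∈ S, ‖x i t - x j t‖ ≤ R) →
      ‖x i t - c t‖ ≤ (∑ j, |a j|) / |∑ j ∈ S, a j| * R := by
    intro t ht
    refine (Finset.norm_sub_centerMass_le a (fun j => x j t) hσ ht).trans ?_
    gcongr
    exact Finset.subset_univ S
  have hdrift : ‖c u - c s‖ ≤ (∑ j, |a j|) ^ 2 * M * (u - s) / |∑ j ∈ S, a j| := by
    simp only [c, Finset.centerMass]
    rw [← smul_sub, norm_smul, norm_inv, Real.norm_eq_abs, inv_mul_eq_div]
    gcongr
    exact hx.norm_sum_smul_sub_le hGM hs hsu hu hS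
  calc ‖x i u - x i s‖ = ‖(x i u - c u) + (c u - c s) + (c s - x i s)‖ := by congr 1; abel
    _ ≤ ‖x i u - c u‖ + ‖c u - c s‖ + ‖x i s - c s‖ := by
        rw [norm_sub_rev (x i s)]; exact norm_add₃_le
    _ ≤ (∑ j, |a j|) / |∑ j ∈ S, a j| * R
          + (∑ j, |a j|) ^ 2 * M * (u - s) / |∑ j ∈ S, a j|
          + (∑ j, |a j|) / |∑ j ∈ S, a j| * R := by
        gcongr
        exacts [hspread u (hRu i hi), hspread s (hRs i hi)]
    _ = _ := by ring

lemma norm_sub_le_of_forall_dist_le (hx : IsVortexSolution N a G T x)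
    (hGM : ∀ r, 1 ≤ r → |deriv G r| ≤ M) {m : ℝ} (hm : 0 < m)
    (hma : ∀ S : Finset (Fin N), S.Nonempty → m ≤ |∑ i ∈ S, a i|) {S : Finset (Fin N)}
    {s u R : ℝ} (hs : 0 ≤ s) (hsu : s ≤ u) (hu : u < T) (hS : IsIsolatedOn x S (Icc s u))
    (hR0 : 0 ≤ R) (hR : ∀ t ∈ Ico s u, ∀ p ∈ S, ∀ q ∈ S, ‖x p t - x q t‖ ≤ R)
    {i : Fin N} (hi : i ∈ S) :
    ‖x i u - x i s‖ ≤ (2 * (∑ j, |a j|) * R + (∑ j, |a j|) ^ 2 * M * T) / m := by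
  have hM : 0 ≤ M := (abs_nonneg _).trans (hGM 1 le_rfl)
  have hnum : 0 ≤ 2 * (∑ j, |a j|) * R + (∑ j, |a j|) ^ 2 * M * T :=
    add_nonneg (by positivity) (mul_nonneg (mul_nonneg (by positivity) hM) (by linarith))
  rcases hsu.eq_or_lt with rfl | hsu'
  · simpa using div_nonneg hnum hm.le
  have hcont : ∀ j, ContinuousOn (x j) (Icc s u) :=
    fun j => (hx.continuousOn j).mono (Icc_subset_Ico hs hu)
  have hRu : ∀ p ∈ S, ∀ q ∈ S, ‖x p u - x q u‖ ≤ R := fun p hp q hq =>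
    ContinuousOn.le_of_forall_Ico_le ((hcont p).sub (hcont q)).norm continuousOn_const hsu'
      fun t ht => hR t ht p hp q hq
  have hσ := hma S ⟨i, hi⟩
  refine (hx.norm_sub_le_of_dist_le hGM hs hsu hu hS (abs_pos.1 (hm.trans_le hσ))
    (hR s ⟨le_rfl, hsu'⟩) hRu hi).trans (div_le_div₀ hnum ?_ hm hσ)
  gcongr
  linarith

lemma isIsolatedOn_of_far (hx : IsVortexSolution N a G T x) {k : ℕ} {C : ℝ} (hC : 0 ≤ C)
    (hIH : DisplacementBounded x T k C) {S P : Finset (Fin N)} {t₁ t' : ℝ} (h0 : 0 ≤ t₁)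
    (hT : t' < T) (hS : IsIsolatedOn x S (Icc t₁ t')) (hPS : P ⊆ S)
    (hP : #P ≤ k) (hQ : #(S \ P) ≤ k)
    (hfar : ∀ p ∈ P, ∀ q ∈ S \ P, 2 * C + 1 < ‖x p t₁ - x q t₁‖) :
    IsIsolatedOn x P (Icc t₁ t') ∧ IsIsolatedOn x (S \ P) (Icc t₁ t') := by
  have hcont : ∀ j, ContinuousOn (x j) (Icc t₁ t') :=
    fun j => (hx.continuousOn j).mono (Icc_subset_Ico h0 hT)
  have hcross : ∀ t ∈ Icc t₁ t', ∀ pq ∈ P ×ˢ (S \ P), 1 < ‖x pq.1 t - x pq.2 t‖ := by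
    refine forall_lt_of_bootstrap (fun pq _ => ((hcont pq.1).sub (hcont pq.2)).norm)
      (fun pq hpq => ?_) fun s hs hweak ⟨p, q⟩ hpq => ?_
    · obtain ⟨hp, hq⟩ := Finset.mem_product.1 hpq
      linarith [hfar _ hp _ hq]
    obtain ⟨hp, hq⟩ := Finset.mem_product.1 hpq
    have hsep : ∀ t ∈ Icc t₁ s, ∀ p ∈ P, ∀ q ∈ S \ P, 1 ≤ ‖x p t - x q t‖ :=
      fun t ht p hp q hq => hweak t ht (p, q) (Finset.mem_product.2 ⟨hp, hq⟩)
    have hSs := hS.mono (Icc_subset_Icc_right hs.2)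
    have hmove_p := hIH P hP t₁ s h0 hs.1 (hs.2.trans_lt hT) (hSs.of_subset hPS hsep) p hp
    have hmove_q := hIH _ hQ t₁ s h0 hs.1 (hs.2.trans_lt hT) (hSs.sdiff hPS hsep) q hq
    have htri := norm_add₃_le (a := x p t₁ - x p s) (b := x p s - x q s) (c := x q s - x q t₁)
    rw [sub_add_sub_cancel, sub_add_sub_cancel, norm_sub_rev (x p t₁) (x p s)] at htri
    show 1 < ‖x p s - x q s‖
    linarith [hfar p hp q hq]
  have hsep : ∀ t ∈ Icc t₁ t', ∀ p ∈ P, ∀ q ∈ S \ P, 1 ≤ ‖x p t - x q t‖ :=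
    fun t ht p hp q hq => (hcross t ht (p, q) (Finset.mem_product.2 ⟨hp, hq⟩)).le
  exact ⟨hS.of_subset hPS hsep, hS.sdiff hPS hsep⟩

lemma displacementBounded_succ (hx : IsVortexSolution N a G T x)
    (hGM : ∀ r, 1 ≤ r → |deriv G r| ≤ M) {m : ℝ} (hm : 0 < m)
    (hma : ∀ S : Finset (Fin N), S.Nonempty → m ≤ |∑ i ∈ S, a i|) {k : ℕ} {C : ℝ}
    (hC : 0 ≤ C) (hIH : DisplacementBounded x T k C) :
    DisplacementBounded x T (k + 1)
      (C + (2 * (∑ i, |a i|) * ((k + 1) * (2 * C + 1)) + (∑ i, |a i|) ^ 2 * M * T) / m) := by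
  intro S hcard t₀ t' h0 h01 hT hS i hi
  set r := 2 * C + 1
  have hr : 0 < r := by positivity
  have hSr : (#S : ℝ) * r ≤ (k + 1) * r := by gcongr; exact_mod_cast hcard
  have hcont : ∀ j, ContinuousOn (x j) (Icc t₀ t') :=
    fun j => (hx.continuousOn j).mono (Icc_subset_Ico h0 hT)
  by_cases hspread : ∃ u ∈ Icc t₀ t', ∃ pq ∈ S ×ˢ S, ‖x pq.1 u - x pq.2 u‖ ∈ Ici (#S * r)
  · obtain ⟨t₁, ht₁, ⟨⟨i₀, j₀⟩, hij, hfar⟩, hbefore⟩ := exists_first_hitting_time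
      (fun pq _ => ((hcont pq.1).sub (hcont pq.2)).norm) isClosed_Ici hspread
    simp only [mem_Ici, not_le] at hfar hbefore
    obtain ⟨hi₀, hj₀⟩ := Finset.mem_product.1 hij
    have hdisp₁ := hx.norm_sub_le_of_forall_dist_le hGM hm hma h0 ht₁.1 (ht₁.2.trans_lt hT)
      (hS.mono (Icc_subset_Icc_right ht₁.2)) (by positivity) (fun u hu p hp q hq =>
        (hbefore u hu (p, q) (Finset.mem_product.2 ⟨hp, hq⟩)).le.trans hSr) hi
    obtain ⟨P, hPS, hi₀P, hj₀P, hPfar⟩ :=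
      S.exists_split_of_le_dist (fun j => x j t₁) hr hi₀ (by rwa [dist_eq_norm])
    have hP : #P ≤ k := Nat.le_of_lt_succ <| hcard.trans_lt' <|
      Finset.card_lt_card ⟨hPS, fun h => hj₀P (h hj₀)⟩
    have hQ : #(S \ P) ≤ k := Nat.le_of_lt_succ <| hcard.trans_lt' <|
      Finset.card_lt_card ⟨Finset.sdiff_subset, fun h => (Finset.mem_sdiff.1 (h hi₀)).2 hi₀P⟩
    obtain ⟨hPiso, hQiso⟩ := hx.isIsolatedOn_of_far hC hIH (h0.trans ht₁.1) hT
      (hS.mono (Icc_subset_Icc_left ht₁.1)) hPS hP hQ (by simpa [dist_eq_norm] using hPfar)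
    have hdisp₂ : ‖x i t' - x i t₁‖ ≤ C := by
      by_cases hiP : i ∈ P
      · exact hIH P hP t₁ t' (h0.trans ht₁.1) ht₁.2 hT hPiso i hiP
      · exact hIH _ hQ t₁ t' (h0.trans ht₁.1) ht₁.2 hT hQiso i (Finset.mem_sdiff.2 ⟨hi, hiP⟩)
    calc ‖x i t' - x i t₀‖ ≤ ‖x i t' - x i t₁‖ + ‖x i t₁ - x i t₀‖ :=
          norm_sub_le_norm_sub_add_norm_sub _ _ _
      _ ≤ _ := add_le_add hdisp₂ hdisp₁
  · push Not at hspread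
    refine (hx.norm_sub_le_of_forall_dist_le hGM hm hma h0 h01 hT hS (by positivity)
      (fun u hu p hp q hq => ?_) hi).trans (le_add_of_nonneg_left hC)
    exact (not_le.1 (hspread u (Ico_subset_Icc_self hu) (p, q)
      (Finset.mem_product.2 ⟨hp, hq⟩))).le.trans hSr

theorem displacementBounded (hx : IsVortexSolution N a G T x)
    (hGM : ∀ r, 1 ≤ r → |deriv G r| ≤ M) {m : ℝ} (hm : 0 < m)
    (hma : ∀ S : Finset (Fin N), S.Nonempty → m ≤ |∑ i ∈ S, a i|) (k : ℕ) :
    DisplacementBounded x T k (clusterBound a m M T k) := by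
  induction k with
  | zero =>
    intro S hS s u _ _ _ _ i hi
    simp [Finset.card_eq_zero.1 (Nat.le_zero.1 hS)] at hi
  | succ k ih =>
    intro S hS s u hs hsu hu
    have hC := clusterBound_nonneg a hm.le ((abs_nonneg _).trans (hGM 1 le_rfl))
      (by linarith) k
    exact hx.displacementBounded_succ hGM hm hma hC ih S hS s u hs hsu hu

end IsVortexSolution

theorem uniform_bound_on_trajectories_general
    (N : ℕ) (a : Fin N → ℝ)
    (hcluster : ∀ P : Finset (Fin N), P.Nonempty → ∑ i ∈ P, a i ≠ 0)
    (T : ℝ) (M : ℝ) :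
    ∃ C > (0 : ℝ), ∀ G : ℝ → ℝ, KernelRegular G →
      (∀ r : ℝ, 1 ≤ r → |deriv G r| ≤ M) →
      ∀ x : Fin N → ℝ → Plane, IsVortexSolution N a G T x →
        ∀ t ∈ Set.Ico (0 : ℝ) T, ∀ i : Fin N, ‖x i t - x i 0‖ ≤ C := by
  obtain ⟨m, hm, hma⟩ := exists_pos_forall_le_abs_sum a hcluster
  refine ⟨max (clusterBound a m M T N) 1, lt_max_of_lt_right one_pos, ?_⟩
  intro G _ hGM x hx t ht i
  have huniv : IsIsolatedOn x Finset.univ (Icc 0 t) :=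
    fun _ _ _ _ j hj => absurd (Finset.mem_univ j) hj
  exact (hx.displacementBounded hGM hm hma N Finset.univ (by simp) 0 t le_rfl ht.1 ht.2 huniv i
    (Finset.mem_univ i)).trans (le_max_left _ _)

/-- Uniform bound on the trajectories under the non-neutral cluster hypothesis:
the constant `C` depends only on `N`, the intensities, `T` and the bound `M` on
`sup_{r≥1} |G'(r)|`; it depends neither on the initial positions nor on the
singularity of `G` near `0`. -/
theorem uniform_bound_on_trajectories
    (N : ℕ) (hN : 1 ≤ N) (a : Fin N → ℝ) (ha : ∀ i, a i ≠ 0)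
    (hcluster : ∀ P : Finset (Fin N), P.Nonempty → ∑ i ∈ P, a i ≠ 0)
    (T : ℝ) (hT : 0 < T) (M : ℝ) (hM : 0 ≤ M) :
    ∃ C > (0 : ℝ), ∀ G : ℝ → ℝ, KernelRegular G →
      (∀ r : ℝ, 1 ≤ r → |deriv G r| ≤ M) →
      ∀ x : Fin N → ℝ → Plane, IsVortexSolution N a G T x →
        ∀ t ∈ Set.Ico (0 : ℝ) T, ∀ i : Fin N, ‖x i t - x i 0‖ ≤ C :=
  uniform_bound_on_trajectories_general N a hcluster T M
end
end

section
/- Absence of collapses for positive intensities: Let G : (0,∞) → ℝ be differentiable with locally Lipschitz derivative on (0,∞), with derivative Lipschitz and bounded on [1,∞), and such that |G(r)| → +∞ as r → 0⁺. Assume all intensities a_1,…,a_N are positive. Then for every T > 0 and every solution (x_1,…,x_N) of the point-vortex system with kernel G on [0,T) with no collapse, one has liminf_{t→T⁻} min_{i≠j} |x_i(t) − x_j(t)| > 0; that is, no collapse of vortices occurs at any finite time. -/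
open Filter MeasureTheory

noncomputable section

/-- The solution `x` collapses at time `T`:
`liminf_{t→T⁻} min_{i≠j} |x_i(t) − x_j(t)| = 0`, phrased as: for every `ε > 0`,
arbitrarily close to `T` (from the left, inside `[0,T)`) two distinct vortices
are at distance `< ε`. -/
def CollapsesAt (N : ℕ) (x : Fin N → ℝ → Plane) (T : ℝ) : Prop :=
  ∀ ε > (0 : ℝ), ∀ t₀, 0 ≤ t₀ → t₀ < T →
    ∃ t, t₀ < t ∧ t < T ∧ ∃ i j : Fin N, i ≠ j ∧ ‖x i t - x j t‖ < ε

/-!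
For positive intensities both the moment of inertia `∑ aᵢ |xᵢ|²` and the Hamiltonian
`∑_{i ≠ j} aᵢ aⱼ G(|xᵢ - xⱼ|)` are conserved along a solution. The first confines every vortex
to a fixed disc, so all mutual distances stay below some `D`. As `G` is continuous and
`|G| → ∞` at `0⁺`, one of `±G` tends to `+∞` there; it is bounded below on `(0, D]`, so every
term of the (correspondingly signed) Hamiltonian is bounded above uniformly in time, which
keeps the mutual distances away from `0`.
-/

open Set Topology RealInnerProductSpace

theorem HasDerivWithinAt.norm_of_ne_zero {E : Type*} [NormedAddCommGroup E]
    [InnerProductSpace ℝ E] {y : ℝ → E} {y' : E} {s : Set ℝ} {t : ℝ}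
    (hy : HasDerivWithinAt y y' s t) (h0 : y t ≠ 0) :
    HasDerivWithinAt (fun u => ‖y u‖) (⟪y t, y'⟫ / ‖y t‖) s t := by
  have hr : 0 < ‖y t‖ := norm_pos_iff.2 h0
  have h := (Real.hasDerivAt_sqrt (pow_pos hr 2).ne').comp_hasDerivWithinAt t hy.norm_sq
  simp only [Function.comp_def, Real.sqrt_sq (norm_nonneg _)] at h
  exact h.congr_deriv (by field_simp)

theorem Convex.eq_of_hasDerivWithinAt_zero {E : Type*} [NormedAddCommGroup E]
    [NormedSpace ℝ E] {f : ℝ → E} {s : Set ℝ} (hs : Convex ℝ s)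
    (hf : ∀ t ∈ s, HasDerivWithinAt f 0 s t) {t₀ t₁ : ℝ} (ht₀ : t₀ ∈ s) (ht₁ : t₁ ∈ s) :
    f t₀ = f t₁ := by
  simpa [sub_eq_zero, eq_comm] using
    hs.norm_image_sub_le_of_norm_hasDerivWithin_le hf (fun _ _ => norm_zero.le) ht₀ ht₁

theorem tendsto_atTop_or_atBot_of_tendsto_abs {f : ℝ → ℝ} {a : ℝ}
    (hf : ContinuousOn f (Ioi a)) (h : Tendsto (fun r => |f r|) (𝓝[>] a) atTop) :
    Tendsto f (𝓝[>] a) atTop ∨ Tendsto f (𝓝[>] a) atBot := by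
  obtain ⟨δ, hδ, hδf⟩ :=
    mem_nhdsGT_iff_exists_Ioo_subset.1 (h.eventually_ge_atTop 1)
  have hsign := isPreconnected_Ioo.eq_or_eq_neg_of_sq_eq (hf.mono Ioo_subset_Ioi_self)
    (continuous_abs.comp_continuousOn (hf.mono Ioo_subset_Ioi_self))
    (fun r _ => (sq_abs (f r)).symm)
    (fun hr => (zero_lt_one.trans_le (hδf hr)).ne')
  have hIoo : Ioo a δ ∈ 𝓝[>] a := Ioo_mem_nhdsGT hδ
  rcases hsign with heq | heq
  · exact .inl (h.congr' (eventuallyEq_of_mem hIoo heq.symm))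
  · exact .inr ((tendsto_neg_atTop_atBot.comp h).congr'
      (eventuallyEq_of_mem hIoo fun r hr => (heq hr).symm))

theorem bddBelow_image_Ioc_of_tendsto_atTop {g : ℝ → ℝ} {a b : ℝ}
    (hgc : ContinuousOn g (Ioc a b)) (hg : Tendsto g (𝓝[>] a) atTop) :
    BddBelow (g '' Ioc a b) := by
  obtain ⟨δ, hδ, hδg⟩ := mem_nhdsGT_iff_exists_Ioc_subset.1 (hg.eventually_ge_atTop 0)
  have hnear : BddBelow (g '' Ioc a δ) := ⟨0, by rintro _ ⟨r, hr, rfl⟩; exact hδg hr⟩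
  have hfar : BddBelow (g '' Icc δ b) :=
    isCompact_Icc.bddBelow_image (hgc.mono fun r hr => ⟨hδ.trans_le hr.1, hr.2⟩)
  refine (hnear.union hfar).mono ?_
  rw [← image_union]
  refine image_mono fun r hr => ?_
  rcases le_or_gt r δ with hrδ | hrδ
  · exact .inl ⟨hr.1, hrδ⟩
  · exact .inr ⟨hrδ.le, hr.2⟩

section PairSums

variable {ι : Type*} [Fintype ι] [DecidableEq ι]

theorem Finset.sum_sum_erase_comm {M : Type*} [AddCommMonoid M] (f : ι → ι → M) :
    ∑ i, ∑ j ∈ Finset.univ.erase i, f i j = ∑ i, ∑ j ∈ Finset.univ.erase i, f j i := by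
  simp only [← Finset.filter_ne', Finset.sum_filter]
  rw [Finset.sum_comm]
  simp only [ne_comm]

theorem sum_sum_erase_mul_inner_sub_sub {E : Type*} [NormedAddCommGroup E]
    [InnerProductSpace ℝ E] {A : ι → ι → ℝ} (hA : ∀ i j, A i j = A j i) (u y : ι → E) :
    ∑ i, ∑ j ∈ Finset.univ.erase i, A i j * ⟪u i - u j, y i - y j⟫ =
      2 * ∑ i, ⟪u i, ∑ j ∈ Finset.univ.erase i, A i j • (y i - y j)⟫ := by
  have hsplit : ∀ i j, A i j * ⟪u i - u j, y i - y j⟫ =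
      A i j * ⟪u i, y i - y j⟫ + A j i * ⟪u j, y j - y i⟫ := by
    intro i j
    rw [hA j i, inner_sub_left, ← neg_sub (y i), inner_neg_right]
    ring
  simp only [hsplit, Finset.sum_add_distrib]
  rw [← Finset.sum_sum_erase_comm (fun i j => A i j * ⟪u i, y i - y j⟫), ← two_mul]
  simp only [inner_sum, real_inner_smul_right]

end PairSums

theorem perp_add (u v : Plane) : perp (u + v) = perp u + perp v := by
  ext i; fin_cases i <;> simp [perp, add_comm]

theorem perp_smul (c : ℝ) (v : Plane) : perp (c • v) = c • perp v := by
  ext i; fin_cases i <;> simp [perp]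

theorem inner_perp_self (v : Plane) : ⟪perp v, v⟫ = 0 := by
  simp [perp, PiLp.inner_apply, Fin.sum_univ_two, mul_comm]

def perpₗ : Plane →ₗ[ℝ] Plane where
  toFun := perp
  map_add' := perp_add
  map_smul' := perp_smul

theorem perp_sub (u v : Plane) : perp (u - v) = perp u - perp v := map_sub perpₗ u v

theorem perp_sum {ι : Type*} (s : Finset ι) (f : ι → Plane) :
    perp (∑ i ∈ s, f i) = ∑ i ∈ s, perp (f i) := map_sum perpₗ f s

section Configuration

variable {ι : Type*} (a : ι → ℝ) (K : ℝ → ℝ) (z : ι → Plane)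

def pairWeight (i j : ι) : ℝ := a i * a j * (deriv K ‖z i - z j‖ / ‖z i - z j‖)

theorem pairWeight_comm (i j : ι) : pairWeight a K z i j = pairWeight a K z j i := by
  simp only [pairWeight, norm_sub_rev (z i)]
  ring

section Finite

variable [Fintype ι]

def momentOfInertia : ℝ := ∑ i, a i * ‖z i‖ ^ 2

theorem norm_le_sum_sqrt_momentOfInertia (ha : ∀ i, 0 < a i) (i : ι) :
    ‖z i‖ ≤ ∑ k, √(momentOfInertia a z / a k) := by
  have hi : a i * ‖z i‖ ^ 2 ≤ momentOfInertia a z :=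
    Finset.single_le_sum (f := fun k => a k * ‖z k‖ ^ 2)
      (fun k _ => mul_nonneg (ha k).le (sq_nonneg _)) (Finset.mem_univ i)
  calc ‖z i‖ ≤ √(momentOfInertia a z / a i) :=
        Real.le_sqrt_of_sq_le ((le_div_iff₀' (ha i)).2 hi)
    _ ≤ ∑ k, √(momentOfInertia a z / a k) :=
        Finset.single_le_sum (f := fun k => √(momentOfInertia a z / a k))
          (fun k _ => Real.sqrt_nonneg _) (Finset.mem_univ i)

variable [DecidableEq ι]

def vortexVelocity (i : ι) : Plane :=
  ∑ j ∈ Finset.univ.erase i, a j • gradPerp K (z i - z j)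

def vortexGradient (i : ι) : Plane :=
  ∑ j ∈ Finset.univ.erase i, (a j * (deriv K ‖z i - z j‖ / ‖z i - z j‖)) • (z i - z j)

def hamiltonian : ℝ := ∑ i, ∑ j ∈ Finset.univ.erase i, a i * a j * K ‖z i - z j‖

theorem vortexVelocity_eq_perp (i : ι) :
    vortexVelocity a K z i = perp (vortexGradient a K z i) := by
  simp only [vortexVelocity, vortexGradient, gradPerp, perp_sum, perp_smul, smul_smul]

theorem smul_vortexGradient (i : ι) :
    a i • vortexGradient a K z i =
      ∑ j ∈ Finset.univ.erase i, pairWeight a K z i j • (z i - z j) := by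
  simp only [vortexGradient, pairWeight, Finset.smul_sum, smul_smul, mul_assoc]

theorem sum_mul_inner_vortexVelocity_self :
    ∑ i, a i * ⟪z i, vortexVelocity a K z i⟫ = 0 := by
  have hrot : ∀ i, a i * ⟪z i, vortexVelocity a K z i⟫ =
      ⟪z i, ∑ j ∈ Finset.univ.erase i, pairWeight a K z i j • (perp (z i) - perp (z j))⟫ := by
    intro i
    rw [← real_inner_smul_right, vortexVelocity_eq_perp, ← perp_smul, smul_vortexGradient,
      perp_sum]
    simp only [perp_smul, perp_sub]
  simp only [hrot]
  rw [← mul_right_inj' (two_ne_zero (α := ℝ)), mul_zero,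
    ← sum_sum_erase_mul_inner_sub_sub (pairWeight_comm a K z)]
  simp only [← perp_sub, real_inner_comm (perp _), inner_perp_self, mul_zero,
    Finset.sum_const_zero]

theorem sum_sum_erase_pairWeight_mul_inner_vortexVelocity :
    ∑ i, ∑ j ∈ Finset.univ.erase i, pairWeight a K z i j *
      ⟪vortexVelocity a K z i - vortexVelocity a K z j, z i - z j⟫ = 0 := by
  rw [sum_sum_erase_mul_inner_sub_sub (pairWeight_comm a K z)]
  simp only [← smul_vortexGradient, real_inner_smul_right, vortexVelocity_eq_perp,
    inner_perp_self, mul_zero, Finset.sum_const_zero]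

theorem hamiltonian_sub_const (m : ℝ) :
    hamiltonian a (fun r => K r - m) z =
      hamiltonian a K z - m * ∑ i, ∑ j ∈ Finset.univ.erase i, a i * a j := by
  simp only [hamiltonian, mul_sub, Finset.sum_sub_distrib, Finset.mul_sum]
  congr 1
  refine Finset.sum_congr rfl fun i _ => Finset.sum_congr rfl fun j _ => ?_
  ring

theorem hamiltonian_neg : hamiltonian a (-K) z = -hamiltonian a K z := by
  simp [hamiltonian]

theorem mul_mul_le_hamiltonian (ha : ∀ i, 0 ≤ a i)
    (hK : ∀ i j, i ≠ j → 0 ≤ K ‖z i - z j‖) {i j : ι} (hij : i ≠ j) :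
    a i * a j * K ‖z i - z j‖ ≤ hamiltonian a K z := by
  have hterm : ∀ k, ∀ l ∈ Finset.univ.erase k, 0 ≤ a k * a l * K ‖z k - z l‖ :=
    fun k l hl => mul_nonneg (mul_nonneg (ha k) (ha l)) (hK k l (Finset.ne_of_mem_erase hl).symm)
  calc a i * a j * K ‖z i - z j‖
      ≤ ∑ l ∈ Finset.univ.erase i, a i * a l * K ‖z i - z l‖ :=
        Finset.single_le_sum (hterm i) (Finset.mem_erase.2 ⟨hij.symm, Finset.mem_univ j⟩)
    _ ≤ hamiltonian a K z :=
        Finset.single_le_sum (fun k _ => Finset.sum_nonneg (hterm k)) (Finset.mem_univ i)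

end Finite

end Configuration

theorem not_collapsesAt_of_forall_le {N : ℕ} {x : Fin N → ℝ → Plane} {T : ℝ} (hT : 0 < T)
    (hsep : ∀ t ∈ Ico (0 : ℝ) T, ∀ i j : Fin N, i ≠ j → x i t ≠ x j t)
    {φ : Fin N → Fin N → ℝ → ℝ} (hφ : ∀ i j, Tendsto (φ i j) (𝓝[>] 0) atTop) (c : ℝ)
    (hbound : ∀ t ∈ Ico (0 : ℝ) T, ∀ i j, i ≠ j → φ i j ‖x i t - x j t‖ ≤ c) :
    ¬ CollapsesAt N x T := by
  intro hcol
  have hlarge : ∀ᶠ r in 𝓝[>] 0, ∀ i j, c < φ i j r :=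
    eventually_all.2 fun i => eventually_all.2 fun j => (hφ i j).eventually_gt_atTop c
  obtain ⟨ε, hε, hεφ⟩ := mem_nhdsGT_iff_exists_Ioo_subset.1 hlarge
  obtain ⟨t, ht₀, htT, i, j, hij, hclose⟩ := hcol ε hε 0 le_rfl hT
  have ht : t ∈ Ico 0 T := ⟨ht₀.le, htT⟩
  have hpos : 0 < ‖x i t - x j t‖ := norm_pos_iff.2 (sub_ne_zero.2 (hsep t ht i j hij))
  exact (hbound t ht i j hij).not_gt (hεφ ⟨hpos, hclose⟩ i j)

namespace IsVortexSolution

variable {N : ℕ} {a : Fin N → ℝ} {G : ℝ → ℝ} {T : ℝ} {x : Fin N → ℝ → Plane}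

theorem hasDerivWithinAt (hsol : IsVortexSolution N a G T x) (i : Fin N) {t : ℝ}
    (ht : t ∈ Ico 0 T) :
    HasDerivWithinAt (x i) (vortexVelocity a G (x · t) i) (Ico 0 T) t :=
  hsol.2 i t ht

theorem hasDerivWithinAt_momentOfInertia (hsol : IsVortexSolution N a G T x) {t : ℝ}
    (ht : t ∈ Ico 0 T) :
    HasDerivWithinAt (fun u => momentOfInertia a (x · u)) 0 (Ico 0 T) t := by
  refine (HasDerivWithinAt.fun_sum fun i _ =>
    ((hsol.hasDerivWithinAt i ht).norm_sq).const_mul (a i)).congr_deriv ?_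
  simp only [mul_left_comm (a _) 2, ← Finset.mul_sum,
    sum_mul_inner_vortexVelocity_self a G (x · t), mul_zero]

theorem hasDerivWithinAt_hamiltonian (hG : DifferentiableOn ℝ G (Ioi 0))
    (hsol : IsVortexSolution N a G T x) {t : ℝ} (ht : t ∈ Ico 0 T) :
    HasDerivWithinAt (fun u => hamiltonian a G (x · u)) 0 (Ico 0 T) t := by
  have hpair : ∀ i, ∀ j ∈ Finset.univ.erase i,
      HasDerivWithinAt (fun u => a i * a j * G ‖x i u - x j u‖)
        (pairWeight a G (x · t) i j * ⟪vortexVelocity a G (x · t) i -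
          vortexVelocity a G (x · t) j, x i t - x j t⟫) (Ico 0 T) t := by
    intro i j hj
    have hne : x i t - x j t ≠ 0 :=
      sub_ne_zero.2 (hsol.1 t ht i j (Finset.ne_of_mem_erase hj).symm)
    have hG' : HasDerivAt G (deriv G ‖x i t - x j t‖) ‖x i t - x j t‖ :=
      (hG.differentiableAt (Ioi_mem_nhds (norm_pos_iff.2 hne))).hasDerivAt
    have hdist :=
      ((hsol.hasDerivWithinAt i ht).fun_sub (hsol.hasDerivWithinAt j ht)).norm_of_ne_zero hne
    refine ((hG'.comp_hasDerivWithinAt t hdist).const_mul (a i * a j)).congr_deriv ?_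
    rw [pairWeight, real_inner_comm]
    ring
  exact (HasDerivWithinAt.fun_sum fun i _ => HasDerivWithinAt.fun_sum (hpair i)).congr_deriv
    (sum_sum_erase_pairWeight_mul_inner_vortexVelocity a G (x · t))

theorem momentOfInertia_eq (hsol : IsVortexSolution N a G T x) {s t : ℝ}
    (hs : s ∈ Ico 0 T) (ht : t ∈ Ico 0 T) :
    momentOfInertia a (x · s) = momentOfInertia a (x · t) :=
  (convex_Ico 0 T).eq_of_hasDerivWithinAt_zero
    (fun _ hu => hsol.hasDerivWithinAt_momentOfInertia hu) hs ht

theorem hamiltonian_eq (hG : DifferentiableOn ℝ G (Ioi 0))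
    (hsol : IsVortexSolution N a G T x) {s t : ℝ} (hs : s ∈ Ico 0 T) (ht : t ∈ Ico 0 T) :
    hamiltonian a G (x · s) = hamiltonian a G (x · t) :=
  (convex_Ico 0 T).eq_of_hasDerivWithinAt_zero
    (fun _ hu => hsol.hasDerivWithinAt_hamiltonian hG hu) hs ht

theorem norm_sub_le_two_mul_sum_sqrt (ha : ∀ i, 0 < a i)
    (hsol : IsVortexSolution N a G T x) (hT : 0 < T)
    {t : ℝ} (ht : t ∈ Ico 0 T) (i j : Fin N) :
    ‖x i t - x j t‖ ≤ 2 * ∑ k, √(momentOfInertia a (x · 0) / a k) := by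
  have hR : ∀ k, ‖x k t‖ ≤ ∑ k, √(momentOfInertia a (x · 0) / a k) := fun k => by
    rw [hsol.momentOfInertia_eq ⟨le_rfl, hT⟩ ht]
    exact norm_le_sum_sqrt_momentOfInertia a (x · t) ha k
  linarith [norm_sub_le (x i t) (x j t), hR i, hR j]

theorem not_collapsesAt_of_hamiltonian_eq (ha : ∀ i, 0 < a i)
    (hsol : IsVortexSolution N a G T x) (hT : 0 < T) {g : ℝ → ℝ}
    (hgc : ContinuousOn g (Ioi 0)) (hg : Tendsto g (𝓝[>] 0) atTop)
    (hH : ∀ t ∈ Ico 0 T, hamiltonian a g (x · t) = hamiltonian a g (x · 0)) :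
    ¬ CollapsesAt N x T := by
  obtain ⟨m, hm⟩ := bddBelow_image_Ioc_of_tendsto_atTop
    (b := 2 * ∑ k, √(momentOfInertia a (x · 0) / a k)) (hgc.mono Ioc_subset_Ioi_self) hg
  have hgm : ∀ t ∈ Ico 0 T, ∀ i j, i ≠ j → 0 ≤ g ‖x i t - x j t‖ - m :=
    fun t ht i j hij => sub_nonneg.2 <| hm <| mem_image_of_mem g
      ⟨norm_pos_iff.2 (sub_ne_zero.2 (hsol.1 t ht i j hij)),
        hsol.norm_sub_le_two_mul_sum_sqrt ha hT ht i j⟩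
  have hgm_tendsto : Tendsto (fun r => g r - m) (𝓝[>] 0) atTop := by
    simpa [sub_eq_add_neg] using tendsto_atTop_add_const_right _ (-m) hg
  refine not_collapsesAt_of_forall_le hT hsol.1 (φ := fun i j r => a i * a j * (g r - m))
    (fun i j => hgm_tendsto.const_mul_atTop (mul_pos (ha i) (ha j)))
    (hamiltonian a g (x · 0) - m * ∑ i, ∑ j ∈ Finset.univ.erase i, a i * a j)
    fun t ht i j hij => ?_
  calc a i * a j * (g ‖x i t - x j t‖ - m)
      ≤ hamiltonian a (fun r => g r - m) (x · t) :=
        mul_mul_le_hamiltonian a (fun r => g r - m) (x · t) (fun k => (ha k).le) (hgm t ht) hij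
    _ = _ := by rw [hamiltonian_sub_const, hH t ht]

end IsVortexSolution

theorem no_collapse_of_positive_intensities_general
    (N : ℕ) (a : Fin N → ℝ) (ha : ∀ i, 0 < a i)
    (G : ℝ → ℝ) (hG : KernelRegular G)
    (hGsing : Tendsto (fun r => |G r|) (nhdsWithin 0 (Set.Ioi 0)) atTop) :
    ∀ T : ℝ, 0 < T → ∀ x : Fin N → ℝ → Plane,
      IsVortexSolution N a G T x → ¬ CollapsesAt N x T := by
  intro T hT x hsol
  have hGc : ContinuousOn G (Ioi 0) := hG.1.continuousOn
  have hH : ∀ t ∈ Ico 0 T, hamiltonian a G (x · t) = hamiltonian a G (x · 0) :=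
    fun t ht => hsol.hamiltonian_eq hG.1 ht ⟨le_rfl, hT⟩
  rcases tendsto_atTop_or_atBot_of_tendsto_abs hGc hGsing with hG_top | hG_bot
  · exact hsol.not_collapsesAt_of_hamiltonian_eq ha hT hGc hG_top hH
  · refine hsol.not_collapsesAt_of_hamiltonian_eq ha hT hGc.neg
      (tendsto_neg_atBot_atTop.comp hG_bot) fun t ht => ?_
    rw [hamiltonian_neg, hamiltonian_neg, hH t ht]

/-- Absence of collapses when all intensities are positive, for a kernel `G` of class
`C^{1,1}_loc((0,∞)) ∩ C^{1,1}([1,∞))` with `G'` bounded on `[1,∞)` and `|G(r)| → +∞`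
as `r → 0⁺`: no collapse of vortices occurs at any finite time. -/
theorem no_collapse_of_positive_intensities
    (N : ℕ) (hN : 1 ≤ N) (a : Fin N → ℝ) (ha : ∀ i, 0 < a i)
    (G : ℝ → ℝ) (hG : KernelRegular G)
    (hGbdd : ∃ M : ℝ, ∀ r : ℝ, 1 ≤ r → |deriv G r| ≤ M)
    (hGsing : Tendsto (fun r => |G r|) (nhdsWithin 0 (Set.Ioi 0)) atTop) :
    ∀ T : ℝ, 0 < T → ∀ x : Fin N → ℝ → Plane,
      IsVortexSolution N a G T x → ¬ CollapsesAt N x T :=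
  no_collapse_of_positive_intensities_general N a ha G hG hGsing
end
end
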